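/- arXiv:2112.08503 — 6 statements merged into one kernel-verified Lean document; each statement's English description precedes it below -/
import Mathlib

section
/- Let T be an edge-weighted tree with nonnegative real weights, and let u, v, w be three leaves of T such that the path between u and v is a longest path (by total weight) in the minimal subtree of T spanning {u, v, w}. Then for any leaf x of T distinct from u, v, w, the distance d_T(x,w) is at most max{d_T(x,u), d_T(x,v)}. -/
open SimpleGraph

/-- An edge-weighted tree: a connected acyclic simple graph together with a
symmetric nonnegative real weight function on (pairs of) vertices. -/
structure WTree (W : Type) where
  g : SimpleGraph W
  conn : g.Connected
  acyclic : g.IsAcyclic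
  wt : W → W → ℝ
  wt_symm : ∀ u v, wt u v = wt v u
  wt_nonneg : ∀ u v, 0 ≤ wt u v

namespace WTree

variable {W : Type}

/-- The total weight of a walk in a weighted tree. -/
def walkWeight (T : WTree W) : {u v : W} → T.g.Walk u v → ℝ
  | _, _, .nil => 0
  | _, _, .cons (u := a) (v := b) _ p => T.wt a b + T.walkWeight p

/-- The weighted distance between two vertices of a weighted tree:
the total weight of the unique path joining them. -/
noncomputable def dist (T : WTree W) (u v : W) : ℝ :=
  letI := Classical.decEq W
  T.walkWeight (((T.conn.preconnected u v).some.toPath : T.g.Path u v) : T.g.Walk u v)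

/-- A leaf of a tree: a vertex with exactly one neighbor. -/
def IsLeaf (T : WTree W) (v : W) : Prop := ∃! u, T.g.Adj v u

/-! ### Auxiliary lemmas -/

variable (T : WTree W)

lemma walkWeight_nonneg {a b : W} (p : T.g.Walk a b) : 0 ≤ T.walkWeight p := by
  induction p with
  | nil => simp [walkWeight]
  | cons h p ih => simpa [walkWeight] using add_nonneg (T.wt_nonneg _ _) ih

lemma walkWeight_append {a b c : W} (p : T.g.Walk a b) (q : T.g.Walk b c) :
    T.walkWeight (p.append q) = T.walkWeight p + T.walkWeight q := by
  induction p with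
  | nil => simp [walkWeight]
  | cons h p ih => simp [walkWeight, ih]; ring

lemma walkWeight_reverse {a b : W} (p : T.g.Walk a b) :
    T.walkWeight p.reverse = T.walkWeight p := by
  induction p with
  | nil => rfl
  | cons h p ih =>
    rw [Walk.reverse_cons, walkWeight_append, ih]
    simp [walkWeight, T.wt_symm]
    ring

/-- The distance equals the weight of any path between the endpoints. -/
lemma dist_eq {a b : W} (p : T.g.Walk a b) (hp : p.IsPath) :
    T.dist a b = T.walkWeight p := by
  rw [dist]
  exact congrArg (fun q : T.g.Path a b => T.walkWeight (q : T.g.Walk a b))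
    (T.acyclic.path_unique _ ⟨p, hp⟩)

lemma dist_symm (a b : W) : T.dist a b = T.dist b a := by
  classical
  set p : T.g.Path a b := (T.conn.preconnected a b).some.toPath with hpdef
  rw [T.dist_eq (p : T.g.Walk a b) p.isPath,
    T.dist_eq ((p : T.g.Walk a b).reverse) p.isPath.reverse, walkWeight_reverse]

lemma walkWeight_dropUntil_le [DecidableEq W] {a b c : W} (p : T.g.Walk a b)
    (h : c ∈ p.support) : T.walkWeight (p.dropUntil c h) ≤ T.walkWeight p := by
  conv_rhs => rw [← Walk.take_spec p h]
  rw [walkWeight_append]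
  have := T.walkWeight_nonneg (p.takeUntil c h)
  linarith

lemma walkWeight_bypass_le [DecidableEq W] {a b : W} (p : T.g.Walk a b) :
    T.walkWeight p.bypass ≤ T.walkWeight p := by
  induction p with
  | nil => simp [Walk.bypass]
  | @cons a c b h p ih =>
    have hw : T.walkWeight (Walk.cons h p) = T.wt a c + T.walkWeight p := rfl
    simp only [Walk.bypass]
    split_ifs with hs
    · have h1 : T.walkWeight (p.bypass.dropUntil _ hs) ≤ T.walkWeight p.bypass :=
        T.walkWeight_dropUntil_le _ hs
      have h2 := T.wt_nonneg a c
      rw [hw]; linarith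
    · have hw2 : T.walkWeight (Walk.cons h p.bypass) = T.wt a c + T.walkWeight p.bypass := rfl
      rw [hw, hw2]; linarith

lemma dist_triangle (a b c : W) : T.dist a c ≤ T.dist a b + T.dist b c := by
  classical
  set p : T.g.Path a b := (T.conn.preconnected a b).some.toPath
  set q : T.g.Path b c := (T.conn.preconnected b c).some.toPath
  have h1 : T.dist a c = T.walkWeight ((p : T.g.Walk a b).append q).bypass :=
    T.dist_eq _ (Walk.bypass_isPath _)
  rw [h1, T.dist_eq (p : T.g.Walk a b) p.isPath, T.dist_eq (q : T.g.Walk b c) q.isPath,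
    ← walkWeight_append]
  exact T.walkWeight_bypass_le _

/-- Additivity of distance along a path. -/
lemma dist_split [DecidableEq W] {a b c : W} {p : T.g.Walk a b} (hp : p.IsPath)
    (hc : c ∈ p.support) : T.dist a b = T.dist a c + T.dist c b := by
  rw [T.dist_eq p hp, T.dist_eq _ (hp.takeUntil hc), T.dist_eq _ (hp.dropUntil hc),
    ← walkWeight_append, Walk.take_spec]

lemma isPath_append {a b c : W} {p : T.g.Walk a b} {q : T.g.Walk b c}
    (hp : p.IsPath) (hq : q.IsPath) (h : ∀ x ∈ p.support, x ∈ q.support → x = b) :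
    (p.append q).IsPath := by
  rw [Walk.isPath_def, Walk.support_append, List.nodup_append]
  refine ⟨hp.support_nodup, ?_, ?_⟩
  · have := hq.support_nodup
    rw [Walk.support_eq_cons] at this
    exact this.of_cons
  · intro x hxp y hxq hxy
    subst hxy
    have hxb : x = b := h x hxp (List.mem_of_mem_tail hxq)
    subst hxb
    have := hq.support_nodup
    rw [Walk.support_eq_cons] at this
    exact (List.nodup_cons.mp this).1 hxq

/-- Splitting a walk at the first vertex belonging to a set containing the endpoint. -/
lemma exists_first_split {a b : W} (r : T.g.Walk a b) (S : Set W) (hb : b ∈ S) :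
    ∃ (m : W) (q : T.g.Walk a m) (s : T.g.Walk m b),
      m ∈ S ∧ r = q.append s ∧ ∀ c ∈ q.support, c ∈ S → c = m := by
  classical
  induction r with
  | nil =>
    exact ⟨_, Walk.nil, Walk.nil, hb, rfl, by intro c hc _; simpa using hc⟩
  | @cons u₁ u₂ u₃ h r ih =>
    by_cases ha : u₁ ∈ S
    · exact ⟨u₁, Walk.nil, Walk.cons h r, ha, rfl, by intro c hc _; simpa using hc⟩
    · obtain ⟨m, q, s, hm, hr, hmin⟩ := ih hb
      refine ⟨m, Walk.cons h q, s, hm, by rw [hr]; rfl, ?_⟩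
      intro c hc hcS
      rcases List.mem_cons.mp (by simpa [Walk.support_cons] using hc) with rfl | hc'
      · exact absurd hcS ha
      · exact hmin c hc' hcS

/-- The median point of `w` with respect to a path from `u` to `v`. -/
lemma exists_median {u v : W} (p : T.g.Walk u v) (hp : p.IsPath) (w : W) :
    ∃ m ∈ p.support, T.dist w u = T.dist w m + T.dist m u ∧
      T.dist w v = T.dist w m + T.dist m v := by
  classical
  set r : T.g.Path w v := (T.conn.preconnected w v).some.toPath with hrdef
  obtain ⟨m, q, s, hm, hr, hmin⟩ :=
    T.exists_first_split (r : T.g.Walk w v) {c | c ∈ p.support} (Walk.end_mem_support p)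
  have hrp : (r : T.g.Walk w v).IsPath := r.isPath
  rw [hr] at hrp
  have hq : q.IsPath := hrp.of_append_left
  -- m is on r, giving the split for d(w,v)
  have hmr : m ∈ (q.append s).support := by
    rw [Walk.mem_support_append_iff]; left; exact Walk.end_mem_support q
  have hwv : T.dist w v = T.dist w m + T.dist m v := T.dist_split hrp hmr
  -- the path from w to u through m
  have htu : (q.append (p.takeUntil m hm).reverse).IsPath := by
    refine T.isPath_append hq (hp.takeUntil hm).reverse ?_
    intro x hxq hxt
    rw [Walk.support_reverse, List.mem_reverse] at hxt
    exact hmin x hxq (Walk.support_takeUntil_subset p hm hxt)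
  have hwu : T.dist w u = T.dist w m + T.dist m u := by
    rw [T.dist_eq _ htu, walkWeight_append, T.dist_eq q hq,
      T.dist_eq _ (hp.takeUntil hm).reverse]
  exact ⟨m, hm, hwu, hwv⟩

end WTree

/-- If `u`, `v`, `w` are leaves of a weighted tree `T` such that the path between `u` and `v`
is a longest path in the minimal subtree of `T` spanning `{u, v, w}` (equivalently, `d_T(u,v)`
is at least `d_T(u,w)` and `d_T(w,v)`), then for any leaf `x` distinct from `u`, `v`, `w`
we have `d_T(x,w) ≤ max (d_T(x,u)) (d_T(x,v))`. -/
theorem leaf_dist_le_max {W : Type} [Fintype W] (T : WTree W) (u v w x : W)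
    (hu : T.IsLeaf u) (hv : T.IsLeaf v) (hw : T.IsLeaf w) (hx : T.IsLeaf x)
    (huv : u ≠ v) (huw : u ≠ w) (hvw : v ≠ w)
    (hxu : x ≠ u) (hxv : x ≠ v) (hxw : x ≠ w)
    (hlong₁ : T.dist u w ≤ T.dist u v) (hlong₂ : T.dist w v ≤ T.dist u v) :
    T.dist x w ≤ max (T.dist x u) (T.dist x v) := by
  classical
  set p : T.g.Path u v := (T.conn.preconnected u v).some.toPath with hpdef
  have hp : (p : T.g.Walk u v).IsPath := p.isPath
  obtain ⟨m, hm, hwu, hwv⟩ := T.exists_median (p : T.g.Walk u v) hp w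
  obtain ⟨y, hy, hxu', hxv'⟩ := T.exists_median (p : T.g.Walk u v) hp x
  have huvm : T.dist u v = T.dist u m + T.dist m v := T.dist_split hp hm
  have huvy : T.dist u v = T.dist u y + T.dist y v := T.dist_split hp hy
  -- symmetries
  have s1 : T.dist u w = T.dist w u := T.dist_symm u w
  have s2 : T.dist w v = T.dist v w := by rw [T.dist_symm]
  have s3 : T.dist u m = T.dist m u := T.dist_symm u m
  have s4 : T.dist u y = T.dist y u := T.dist_symm u y
  have s5 : T.dist x u = T.dist u x := T.dist_symm x u
  have s6 : T.dist x v = T.dist v x := T.dist_symm x v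
  have s7 : T.dist x y = T.dist y x := T.dist_symm x y
  have s8 : T.dist m w = T.dist w m := T.dist_symm m w
  -- w hangs off m with d(w,m) ≤ d(m,u) and d(w,m) ≤ d(m,v)
  have hwm1 : T.dist w m ≤ T.dist u m := by
    have := T.dist_symm w v
    -- hlong₂ : d(w,v) ≤ d(u,v) = d(u,m)+d(m,v); d(w,v) = d(w,m)+d(m,v)
    linarith [hwv, huvm, hlong₂]
  have hwm2 : T.dist w m ≤ T.dist m v := by
    -- hlong₁ : d(u,w) ≤ d(u,v); d(u,w) = d(w,u) = d(w,m)+d(m,u) = d(w,m)+d(u,m)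
    linarith [hwu, huvm, hlong₁, s1, s3]
  -- triangle: d(x,w) ≤ d(x,y) + d(y,m) + d(m,w)
  have htri : T.dist x w ≤ T.dist x y + T.dist y m + T.dist m w := by
    have t1 : T.dist x w ≤ T.dist x y + T.dist y w := T.dist_triangle x y w
    have t2 : T.dist y w ≤ T.dist y m + T.dist m w := T.dist_triangle y m w
    linarith
  -- split: y is on the u–m part or the m–v part of p
  have hy' : y ∈ ((p : T.g.Walk u v).takeUntil m hm).support ∨
      y ∈ ((p : T.g.Walk u v).dropUntil m hm).support := by
    rw [← Walk.mem_support_append_iff, Walk.take_spec]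
    exact hy
  rcases hy' with hcase | hcase
  · -- y between u and m: bound by d(x,v)
    have hum : T.dist u m = T.dist u y + T.dist y m :=
      T.dist_split (hp.takeUntil hm) hcase
    -- d(y,v) = d(y,m) + d(m,v)
    have hyv : T.dist y v = T.dist y m + T.dist m v := by linarith [huvy, huvm, hum]
    have : T.dist x w ≤ T.dist x v := by linarith [htri, hxv', hwm2, s8]
    exact le_max_of_le_right this
  · -- y between m and v: bound by d(x,u)
    have hmv : T.dist m v = T.dist m y + T.dist y v :=
      T.dist_split (hp.dropUntil hm) hcase
    have hyu : T.dist y u = T.dist m y + T.dist u m := by linarith [huvy, huvm, s4]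
    have hym : T.dist y m = T.dist m y := T.dist_symm y m
    have : T.dist x w ≤ T.dist x u := by linarith [htri, hxu', hwm1, s8, s4]
    exact le_max_of_le_left this
end

section
/- If a graph G is a PCG, then there exists a tree T whose edge weights are natural numbers and natural numbers a ≤ b such that G = PCG(T, [a, b]). -/
open SimpleGraph

/-- `G` is realized as a pairwise compatibility graph by the weighted tree `T`,
the set `I` of real numbers, and the map `f` identifying the vertices of `G`
with the leaves of `T`. -/
def IsPCGOn {V W : Type} (G : SimpleGraph V) (T : WTree W) (I : Set ℝ) (f : V → W) : Prop :=
  Function.Injective f ∧ (∀ v, T.IsLeaf (f v)) ∧ (∀ w, T.IsLeaf w → ∃ v, f v = w) ∧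
    ∀ u v, u ≠ v → (G.Adj u v ↔ T.dist (f u) (f v) ∈ I)

/-- A graph is a PCG if it is realized by some finite weighted tree together with
an interval `[a, b]` of nonnegative reals. -/
def IsPCG {V : Type} (G : SimpleGraph V) : Prop :=
  ∃ (W : Type) (_ : Fintype W) (T : WTree W) (a b : ℝ) (f : V → W),
    0 ≤ a ∧ IsPCGOn G T (Set.Icc a b) f

/-- A graph is a `k`-interval-PCG if it is realized by a finite weighted tree together
with `k` pairwise disjoint intervals of nonnegative reals, an edge being present iff
the corresponding leaf distance lies in one of the intervals. -/
def IsKIntervalPCG {V : Type} (k : ℕ) (G : SimpleGraph V) : Prop :=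
  ∃ (W : Type) (_ : Fintype W) (T : WTree W) (I : Fin k → Set ℝ) (f : V → W),
    (∀ i, ∃ a b : ℝ, 0 ≤ a ∧ I i = Set.Icc a b) ∧
    Pairwise (Function.onFun Disjoint I) ∧
    Function.Injective f ∧ (∀ v, T.IsLeaf (f v)) ∧ (∀ w, T.IsLeaf w → ∃ v, f v = w) ∧
    ∀ u v, u ≠ v → (G.Adj u v ↔ ∃ i, T.dist (f u) (f v) ∈ I i)

/-- A graph is a `k`-OR-PCG if its edge set is the union of the edge sets of `k` PCGs
on the same vertex set. -/
def IsORPCG {V : Type} (k : ℕ) (G : SimpleGraph V) : Prop :=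
  ∃ Gs : Fin k → SimpleGraph V, (∀ i, IsPCG (Gs i)) ∧ G = ⨆ i, Gs i

/-- A graph is a `k`-AND-PCG if its edge set is the intersection of the edge sets of
`k` PCGs on the same vertex set. -/
def IsANDPCG {V : Type} (k : ℕ) (G : SimpleGraph V) : Prop :=
  ∃ Gs : Fin k → SimpleGraph V, (∀ i, IsPCG (Gs i)) ∧ G = ⨅ i, Gs i

section Aux

variable {W : Type}

noncomputable def canon2 (g : SimpleGraph W) (hc : g.Connected) (u v : W) : g.Walk u v :=
  letI := Classical.decEq W
  (((hc.preconnected u v).some.toPath : g.Path u v) : g.Walk u v)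

lemma canon2_isPath (g : SimpleGraph W) (hc : g.Connected) (u v : W) :
    (canon2 g hc u v).IsPath := by
  letI := Classical.decEq W
  exact ((hc.preconnected u v).some.toPath).2

def wsum {G : SimpleGraph W} (w : W → W → ℝ) : {u v : W} → G.Walk u v → ℝ
  | _, _, .nil => 0
  | _, _, .cons (u := a) (v := b) _ p => w a b + wsum w p

lemma walkWeight_eq_wsum (T : WTree W) {u v : W} (p : T.g.Walk u v) :
    T.walkWeight p = wsum T.wt p := by
  induction p with
  | nil => rfl
  | cons h p ih => simp only [WTree.walkWeight, wsum, ih]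

lemma dist_eq_wsum (T : WTree W) (u v : W) :
    T.dist u v = wsum T.wt (canon2 T.g T.conn u v) :=
  walkWeight_eq_wsum T _

lemma wsum_nonneg {G : SimpleGraph W} {w : W → W → ℝ} (hw : ∀ u v, 0 ≤ w u v)
    {u v : W} (p : G.Walk u v) : 0 ≤ wsum w p := by
  induction p with
  | nil => exact le_refl _
  | cons h p ih => exact add_nonneg (hw _ _) ih

lemma wsum_mono {G : SimpleGraph W} {w w' : W → W → ℝ} (h : ∀ u v, w u v ≤ w' u v)
    {u v : W} (p : G.Walk u v) : wsum w p ≤ wsum w' p := by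
  induction p with
  | nil => exact le_refl _
  | cons ha p ih => exact add_le_add (h _ _) ih

lemma wsum_le_add {G : SimpleGraph W} {w w' : W → W → ℝ} (h : ∀ u v, w' u v ≤ w u v + 1)
    {u v : W} (p : G.Walk u v) : wsum w' p ≤ wsum w p + p.length := by
  induction p with
  | nil => simp [wsum]
  | cons hadj p ih =>
      rename_i x y z
      simp only [wsum, Walk.length_cons]
      push_cast
      have hx := h x y
      linarith

lemma wsum_const_mul {G : SimpleGraph W} (w : W → W → ℝ) (c : ℝ)
    {u v : W} (p : G.Walk u v) : wsum (fun x y => c * w x y) p = c * wsum w p := by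
  induction p with
  | nil => simp [wsum]
  | cons h p ih => simp only [wsum, ih]; ring

lemma wsum_zero {G : SimpleGraph W} {u v : W} (p : G.Walk u v) :
    wsum (fun _ _ => (0:ℝ)) p = 0 := by
  induction p with
  | nil => rfl
  | cons h p ih => simp [wsum, ih]

end Aux

/-- If a graph `G` is a PCG, then there exists a tree `T` whose edge weights are natural
numbers and natural numbers `a ≤ b` such that `G = PCG(T, [a, b])`. -/
theorem isPCG_nat_weights {V : Type} [Fintype V] (G : SimpleGraph V) (h : IsPCG G) :
    ∃ (W : Type) (_ : Fintype W) (T : WTree W) (a b : ℕ) (f : V → W),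
      (∀ u v : W, ∃ n : ℕ, T.wt u v = (n : ℝ)) ∧ a ≤ b ∧
      IsPCGOn G T (Set.Icc (a : ℝ) (b : ℝ)) f := by
  classical
  obtain ⟨W, instW, T, a, b, f, ha0, hpcg⟩ := h
  obtain ⟨finj, hleaf, hsurj, hadj⟩ := hpcg
  by_cases hab : a ≤ b
  · -- main case
    have hb0 : 0 ≤ b := le_trans ha0 hab
    set n := Fintype.card W with hn
    set d : V → V → ℝ := fun u v => T.dist (f u) (f v) with hd
    have hd0 : ∀ u v, 0 ≤ d u v := by
      intro u v
      rw [hd]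
      simp only
      rw [dist_eq_wsum]
      exact wsum_nonneg T.wt_nonneg _
    set gp : V × V → ℝ := fun q =>
      if d q.1 q.2 < a then a - d q.1 q.2 else d q.1 q.2 - b with hgp
    set P : Finset (V × V) :=
      Finset.univ.filter (fun q => d q.1 q.2 ∉ Set.Icc a b) with hP
    set S : Finset ℝ := insert 1 (P.image gp) with hS
    have hSne : S.Nonempty := Finset.insert_nonempty _ _
    set γ := S.min' hSne with hγ
    have hγpos : 0 < γ := by
      rw [hγ, Finset.lt_min'_iff]
      intro x hx
      rcases Finset.mem_insert.mp hx with h1 | h2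
      · simp [h1]
      · obtain ⟨q, hq, rfl⟩ := Finset.mem_image.mp h2
        have hq' : d q.1 q.2 ∉ Set.Icc a b := (Finset.mem_filter.mp hq).2
        rw [Set.mem_Icc] at hq'
        push_neg at hq'
        by_cases hlt : d q.1 q.2 < a
        · simp only [hgp, if_pos hlt]
          linarith
        · push_neg at hlt
          have hbd : b < d q.1 q.2 := hq' hlt
          simp only [hgp, if_neg (not_lt.mpr hlt)]
          linarith
    have hγle : ∀ q ∈ P, γ ≤ gp q := by
      intro q hq
      exact Finset.min'_le _ _ (Finset.mem_insert_of_mem (Finset.mem_image_of_mem _ hq))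
    obtain ⟨N, hN⟩ := exists_nat_gt (4 * ((n : ℝ) + 1) / γ)
    have hNγ : 4 * ((n : ℝ) + 1) < N * γ := by
      rw [div_lt_iff₀ hγpos] at hN
      linarith
    have hN0 : (0:ℝ) ≤ N := Nat.cast_nonneg N
    set w' : W → W → ℝ := fun x y => ((⌈(N : ℝ) * T.wt x y⌉₊ : ℕ) : ℝ) with hw'
    have hw'symm : ∀ u v, w' u v = w' v u := by
      intro u v; simp [hw', T.wt_symm u v]
    have hw'nn : ∀ u v, 0 ≤ w' u v := fun u v => Nat.cast_nonneg _
    set T' : WTree W := ⟨T.g, T.conn, T.acyclic, w', hw'symm, hw'nn⟩ with hT'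
    have hdist' : ∀ x y : W, T'.dist x y = wsum w' (canon2 T.g T.conn x y) := by
      intro x y
      exact dist_eq_wsum T' x y
    have hlen : ∀ x y : W, ((canon2 T.g T.conn x y).length : ℝ) ≤ n := by
      intro x y
      have := (canon2_isPath T.g T.conn x y).length_lt
      exact_mod_cast le_of_lt this
    have hlow : ∀ x y : W, (N : ℝ) * T.dist x y ≤ T'.dist x y := by
      intro x y
      rw [hdist', dist_eq_wsum]
      rw [← wsum_const_mul T.wt (N : ℝ) (canon2 T.g T.conn x y)]
      refine wsum_mono (fun u v => ?_) _
      exact Nat.le_ceil _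
    have hhigh : ∀ x y : W, T'.dist x y ≤ (N : ℝ) * T.dist x y + n := by
      intro x y
      rw [hdist', dist_eq_wsum]
      have h1 : wsum w' (canon2 T.g T.conn x y) ≤
          wsum (fun u v => (N : ℝ) * T.wt u v) (canon2 T.g T.conn x y) +
          (canon2 T.g T.conn x y).length := by
        refine wsum_le_add (fun u v => ?_) _
        exact le_of_lt (Nat.ceil_lt_add_one (mul_nonneg hN0 (T.wt_nonneg u v)))
      rw [wsum_const_mul] at h1
      have := hlen x y
      linarith
    set A : ℕ := ⌊(N : ℝ) * a⌋₊ with hA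
    set B : ℕ := ⌊(N : ℝ) * b⌋₊ + n + 1 with hB
    have hAle : (A : ℝ) ≤ (N : ℝ) * a := Nat.floor_le (mul_nonneg hN0 ha0)
    have hAgt : (N : ℝ) * a < A + 1 := Nat.lt_floor_add_one _
    have hBle : (⌊(N : ℝ) * b⌋₊ : ℝ) ≤ (N : ℝ) * b := Nat.floor_le (mul_nonneg hN0 hb0)
    have hBgt : (N : ℝ) * b < (⌊(N : ℝ) * b⌋₊ : ℝ) + 1 := Nat.lt_floor_add_one _
    have hBcast : (B : ℝ) = (⌊(N : ℝ) * b⌋₊ : ℝ) + n + 1 := by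
      rw [hB]; push_cast; ring
    refine ⟨W, instW, T', A, B, f, fun u v => ⟨⌈(N : ℝ) * T.wt u v⌉₊, rfl⟩, ?_, finj,
      hleaf, hsurj, ?_⟩
    · -- A ≤ B
      have : (A : ℝ) < (B : ℝ) := by
        rw [hBcast]
        have hab' : (N : ℝ) * a ≤ (N : ℝ) * b := mul_le_mul_of_nonneg_left hab hN0
        have hn0 : (0:ℝ) ≤ n := Nat.cast_nonneg n
        linarith
      exact_mod_cast le_of_lt this
    · intro u v huv
      rw [hadj u v huv]
      have hlow' := hlow (f u) (f v)
      have hhigh' := hhigh (f u) (f v)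
      constructor
      · rintro ⟨h1, h2⟩
        constructor
        · have : (N : ℝ) * a ≤ (N : ℝ) * T.dist (f u) (f v) :=
            mul_le_mul_of_nonneg_left h1 hN0
          linarith
        · have : (N : ℝ) * T.dist (f u) (f v) ≤ (N : ℝ) * b :=
            mul_le_mul_of_nonneg_left h2 hN0
          rw [hBcast]
          linarith
      · intro hmem
        by_contra hnot
        have hqP : (u, v) ∈ P := by
          rw [hP, Finset.mem_filter]
          exact ⟨Finset.mem_univ _, hnot⟩
        have hγq := hγle _ hqP
        have hNγ' := hNγ
        obtain ⟨hm1, hm2⟩ := hmem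
        rw [Set.mem_Icc] at hnot
        push_neg at hnot
        rw [hBcast] at hm2
        by_cases hlt : d u v < a
        · -- d ≤ a - γ
          simp only [hgp, if_pos hlt] at hγq
          have hda : d u v ≤ a - γ := by linarith
          have : (N : ℝ) * d u v ≤ (N : ℝ) * (a - γ) :=
            mul_le_mul_of_nonneg_left hda hN0
          have hduv : d u v = T.dist (f u) (f v) := rfl
          rw [hduv] at this
          have hn0 : (0:ℝ) ≤ n := Nat.cast_nonneg n
          nlinarith [mul_le_mul_of_nonneg_left (le_refl γ) hN0]
        · push_neg at hlt
          have hbd : b < d u v := hnot hlt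
          simp only [hgp, if_neg (not_lt.mpr hlt)] at hγq
          have hdb : b + γ ≤ d u v := by linarith
          have : (N : ℝ) * (b + γ) ≤ (N : ℝ) * d u v :=
            mul_le_mul_of_nonneg_left hdb hN0
          have hduv : d u v = T.dist (f u) (f v) := rfl
          rw [hduv] at this
          have hn0 : (0:ℝ) ≤ n := Nat.cast_nonneg n
          nlinarith
  · -- degenerate case: empty interval
    set T' : WTree W := ⟨T.g, T.conn, T.acyclic, fun _ _ => 0,
      fun _ _ => rfl, fun _ _ => le_refl 0⟩ with hT'
    refine ⟨W, instW, T', 1, 1, f, fun u v => ⟨0, by norm_num⟩, le_refl 1, finj,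
      hleaf, hsurj, ?_⟩
    intro u v huv
    rw [hadj u v huv, Set.Icc_eq_empty hab]
    have h2 : T'.dist (f u) (f v) = 0 := by
      rw [dist_eq_wsum T' (f u) (f v)]
      exact wsum_zero _
    rw [h2]
    simp [Set.mem_Icc]
end

section
/- If G is a PCG and x is a vertex of G, then the graph obtained from G by adding a new vertex x' whose neighborhood is exactly the neighborhood of x (with x' not adjacent to x) is also a PCG. -/
open SimpleGraph

/-! ### Auxiliary material -/

namespace PCGAux

open SimpleGraph Walk WTree

variable {W : Type}

lemma walkWeight_append (T : WTree W) {u v w : W} (p : T.g.Walk u v) (q : T.g.Walk v w) :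
    T.walkWeight (p.append q) = T.walkWeight p + T.walkWeight q := by
  induction p with
  | nil => simp [walkWeight]
  | cons h p ih => simp only [Walk.cons_append, walkWeight, ih]; ring

lemma walkWeight_reverse (T : WTree W) {u v : W} (p : T.g.Walk u v) :
    T.walkWeight p.reverse = T.walkWeight p := by
  induction p with
  | nil => rfl
  | cons h p ih =>
    rw [Walk.reverse_cons, walkWeight_append, ih]
    simp only [walkWeight, T.wt_symm]
    ring

lemma dist_eq (T : WTree W) {u v : W} (p : T.g.Walk u v) (hp : p.IsPath) :
    T.dist u v = T.walkWeight p := by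
  unfold WTree.dist
  have hu := SimpleGraph.isAcyclic_iff_path_unique.mp T.acyclic
    (letI := Classical.decEq W; ((T.conn.preconnected u v).some.toPath)) ⟨p, hp⟩
  rw [hu]

lemma dist_symm (T : WTree W) (u v : W) : T.dist u v = T.dist v u := by
  classical
  obtain ⟨p, hp⟩ := (T.conn.preconnected u v).some.toPath
  rw [dist_eq T p hp, dist_eq T p.reverse hp.reverse, walkWeight_reverse]

/-- Interior vertices of a path are not leaves. -/
lemma not_isLeaf_of_interior (T : WTree W) :
    ∀ {u v : W} (p : T.g.Walk u v), p.IsPath →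
      ∀ w ∈ p.support, w ≠ u → w ≠ v → ¬ T.IsLeaf w := by
  intro u v p
  induction p with
  | nil =>
    intro _ w hw hwu _
    simp only [Walk.support_nil, List.mem_singleton] at hw
    exact absurd hw hwu
  | @cons u c v h q ih =>
    intro hp w hw hwu hwv
    simp only [Walk.support_cons, List.mem_cons] at hw
    rcases hw with rfl | hw
    · exact absurd rfl hwu
    by_cases hwc : w = c
    · subst hwc
      -- w = c is adjacent to u and to the next vertex of q
      have hcv : w ≠ v := hwv
      cases q with
      | nil => exact absurd rfl hcv
      | @cons _ d _ h' q' =>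
        rintro ⟨z, hz, huniq⟩
        have h1 : z = u := (huniq u h.symm).symm
        have h2 : z = d := (huniq d h').symm
        have hu_not : u ∉ (Walk.cons h' q').support := ((Walk.cons_isPath_iff _ _).mp hp).2
        have hd : d ∈ (Walk.cons h' q').support := by
          simp [Walk.support_cons, Walk.start_mem_support]
        have hud : u = d := by rw [← h1, h2]
        exact hu_not (hud ▸ hd)
    · exact ih hp.of_cons w hw hwc hwv

open Classical in
/-- The extra weight put on pendant edges. -/
noncomputable def pen (T : WTree W) (u v : W) : ℝ :=
  (if T.IsLeaf u ∧ T.g.Adj u v then 1 else 0) + (if T.IsLeaf v ∧ T.g.Adj u v then 1 else 0)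

/-- The tree `T` with every pendant edge weight increased by 1. -/
noncomputable def shift (T : WTree W) : WTree W where
  g := T.g
  conn := T.conn
  acyclic := T.acyclic
  wt u v := T.wt u v + pen T u v
  wt_symm := by
    intro u v
    show T.wt u v + pen T u v = T.wt v u + pen T v u
    unfold pen
    rw [T.wt_symm u v, T.g.adj_comm u v]
    ring
  wt_nonneg := by
    intro u v
    show 0 ≤ T.wt u v + pen T u v
    have := T.wt_nonneg u v
    unfold pen
    split_ifs <;> linarith

lemma shift_walkWeight_aux (T : WTree W) :
    ∀ {c v : W} (q : T.g.Walk c v), q.IsPath → ¬ T.IsLeaf c → T.IsLeaf v →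
      (∀ w ∈ q.support, w ≠ c → w ≠ v → ¬ T.IsLeaf w) →
      (shift T).walkWeight q = T.walkWeight q + 1 := by
  intro c v q
  induction q with
  | nil => intro _ hc hv _; exact absurd hv hc
  | @cons c d v h q' ih =>
    intro hp hc hv hint
    by_cases hd : d = v
    · subst hd
      have : q' = nil := Walk.isPath_iff_eq_nil.mp hp.of_cons
      subst this
      show T.wt c d + pen T c d + _ = T.wt c d + _ + 1
      unfold pen
      rw [if_neg (fun hh => hc hh.1), if_pos ⟨hv, h⟩]
      show T.wt c d + (0 + 1) + (shift T).walkWeight .nil = T.wt c d + (T.walkWeight .nil) + 1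
      show T.wt c d + (0 + 1) + 0 = T.wt c d + 0 + 1
      ring
    · have hdc : d ≠ c := fun hh => T.g.loopless.irrefl c (hh ▸ h)
      have hdleaf : ¬ T.IsLeaf d := by
        refine hint d ?_ hdc hd
        simp [Walk.support_cons, Walk.start_mem_support]
      have hq' := ih hp.of_cons hdleaf hv (by
        intro w hw hwd hwv
        refine hint w ?_ ?_ hwv
        · simp [Walk.support_cons, hw]
        · intro hwc; subst hwc; exact ((Walk.cons_isPath_iff _ _).mp hp).2 hw)
      show T.wt c d + pen T c d + (shift T).walkWeight q' = T.wt c d + T.walkWeight q' + 1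
      unfold pen
      rw [if_neg (fun hh => hc hh.1), if_neg (fun hh => hdleaf hh.1), hq']
      ring

lemma shift_dist (T : WTree W) {u v : W} (hu : T.IsLeaf u) (hv : T.IsLeaf v) (huv : u ≠ v) :
    (shift T).dist u v = T.dist u v + 2 := by
  classical
  obtain ⟨p, hp⟩ := (T.conn.preconnected u v).some.toPath
  rw [dist_eq T p hp, dist_eq (shift T) p hp]
  cases p with
  | nil => exact absurd rfl huv
  | @cons u c v h q =>
    show T.wt u c + pen T u c + (shift T).walkWeight q = T.wt u c + T.walkWeight q + 2
    by_cases hcv : c = v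
    · subst hcv
      have : q = nil := Walk.isPath_iff_eq_nil.mp hp.of_cons
      subst this
      unfold pen
      rw [if_pos ⟨hu, h⟩, if_pos ⟨hv, h⟩]
      show T.wt u c + (1 + 1) + 0 = T.wt u c + 0 + 2
      ring
    · have hcu : c ≠ u := fun hh => T.g.loopless.irrefl u (hh ▸ h)
      have hcleaf : ¬ T.IsLeaf c := by
        refine not_isLeaf_of_interior T (Walk.cons h q) hp c ?_ hcu hcv
        simp [Walk.support_cons, Walk.start_mem_support]
      have hq := shift_walkWeight_aux T q hp.of_cons hcleaf hv (by
        intro w hw hwc hwv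
        refine not_isLeaf_of_interior T (Walk.cons h q) hp w ?_ ?_ hwv
        · simp [Walk.support_cons, hw]
        · intro hwu; subst hwu; exact ((Walk.cons_isPath_iff _ _).mp hp).2 hw)
      unfold pen
      rw [if_pos ⟨hu, h⟩, if_neg (fun hh => hcleaf hh.1), hq]
      ring

/-! ### Attaching two weight-zero twin leaves at a leaf `ℓ` -/

/-- The graph obtained from `g` by attaching two new pendant vertices at `ℓ`. -/
def extG (g : SimpleGraph W) (ℓ : W) : SimpleGraph (W ⊕ Bool) where
  Adj a b := match a, b with
    | .inl u, .inl v => g.Adj u v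
    | .inl u, .inr _ => u = ℓ
    | .inr _, .inl v => v = ℓ
    | .inr _, .inr _ => False
  symm := by
    refine ⟨?_⟩
    rintro (u | i) (v | j) h
    · exact h.symm
    · exact h
    · exact h
    · exact h.elim
  loopless := by
    refine ⟨?_⟩
    rintro (u | i) h
    · exact g.loopless.irrefl u h
    · exact h.elim

def extHom (g : SimpleGraph W) (ℓ : W) : g →g extG g ℓ := ⟨Sum.inl, fun h => h⟩

lemma ext_pullback (g : SimpleGraph W) (ℓ : W) :
    ∀ {s t : W ⊕ Bool} (p : (extG g ℓ).Walk s t),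
      (∀ x ∈ p.support, ∃ w, x = Sum.inl w) → ∀ {u v : W},
      (hu : s = Sum.inl u) → (hv : t = Sum.inl v) →
      ∃ P : g.Walk u v, P.map (extHom g ℓ) = p.copy hu hv := by
  intro s t p
  induction p with
  | nil =>
    intro _ u v hu hv
    subst hu
    injection hv with hv
    subst hv
    exact ⟨Walk.nil, by simp; rfl⟩
  | @cons s y t h q ih =>
    intro hsup u v hu hv
    subst hu
    subst hv
    obtain ⟨w, rfl⟩ := hsup y (by simp [Walk.support_cons, Walk.start_mem_support])
    have h' : g.Adj u w := h
    obtain ⟨Q, hQ⟩ := ih (fun x hx => hsup x (by simp [Walk.support_cons, hx])) rfl rfl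
    refine ⟨Walk.cons h' Q, ?_⟩
    rw [Walk.map_cons, hQ]
    simp
    rfl

lemma extG_acyclic (g : SimpleGraph W) (ℓ : W) (hg : g.IsAcyclic) :
    (extG g ℓ).IsAcyclic := by
  classical
  intro a c hc
  rcases Classical.em (∃ i : Bool, (Sum.inr i : W ⊕ Bool) ∈ c.support) with hi | hi
  · obtain ⟨i, hi⟩ := hi
    have hc' := hc.rotate hi
    generalize hcc : c.rotate _ hi = c' at hc'
    cases c' with
    | nil => exact hc'.not_of_nil
    | @cons _ y _ h p =>
      obtain ⟨w, rfl⟩ : ∃ w, y = Sum.inl w := by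
        cases y with
        | inl w => exact ⟨w, rfl⟩
        | inr j => exact h.elim
      have hp : p.IsPath := ((Walk.cons_isCycle_iff p h).mp hc').1
      have hne : (Sum.inr i : W ⊕ Bool) ≠ Sum.inl w := by simp
      obtain ⟨z, h₂, p₂, hrev⟩ := Walk.exists_eq_cons_of_ne hne p.reverse
      obtain ⟨w', rfl⟩ : ∃ w', z = Sum.inl w' := by
        cases z with
        | inl w' => exact ⟨w', rfl⟩
        | inr j => exact h₂.elim
      have e1 : w = ℓ := h
      have e2 : w' = ℓ := h₂
      obtain rfl : w' = w := e2.trans e1.symm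
      have hp₂ : p₂.IsPath := by
        have := hp.reverse
        rw [hrev] at this
        exact this.of_cons
      have hp₂nil : p₂ = Walk.nil := Walk.isPath_iff_eq_nil.mp hp₂
      have hlen : p.length = 1 := by
        have : p.reverse.length = 1 := by rw [hrev, hp₂nil]; rfl
        rwa [Walk.length_reverse] at this
      have h3 := hc'.three_le_length
      simp [Walk.length_cons, hlen] at h3
  · push_neg at hi
    have hall : ∀ x ∈ c.support, ∃ w, x = Sum.inl w := by
      rintro (w | j) hx
      · exact ⟨w, rfl⟩
      · exact absurd hx (hi j)
    obtain ⟨u, rfl⟩ := hall a c.start_mem_support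
    obtain ⟨P, hP⟩ := ext_pullback g ℓ c hall rfl rfl
    rw [Walk.copy_rfl_rfl] at hP
    have hinj : Function.Injective (extHom g ℓ) := Sum.inl_injective
    exact hg P ((Walk.map_isCycle_iff_of_injective hinj).mp (hP ▸ hc))

/-- The extended weighted tree. -/
noncomputable def extT (T : WTree W) (ℓ : W) : WTree (W ⊕ Bool) where
  g := extG T.g ℓ
  conn := by
    have hpre : ∀ a : W ⊕ Bool, (extG T.g ℓ).Reachable a (Sum.inl ℓ) := by
      rintro (u | i)
      · exact (T.conn.preconnected u ℓ).map (extHom T.g ℓ)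
      · exact SimpleGraph.Adj.reachable (show ℓ = ℓ from rfl)
    haveI : Nonempty (W ⊕ Bool) := ⟨Sum.inl ℓ⟩
    exact SimpleGraph.Connected.mk (fun a b => (hpre a).trans (hpre b).symm)
  acyclic := extG_acyclic T.g ℓ T.acyclic
  wt a b := match a, b with
    | .inl u, .inl v => T.wt u v
    | _, _ => 0
  wt_symm := by rintro (u | i) (v | j) <;> simp [T.wt_symm]
  wt_nonneg := by rintro (u | i) (v | j) <;> simp [T.wt_nonneg]

section ExtLemmas

variable (T : WTree W) (ℓ : W)

lemma extT_walkWeight_map : ∀ {u v : W} (p : T.g.Walk u v),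
    (extT T ℓ).walkWeight (p.map (extHom T.g ℓ)) = T.walkWeight p := by
  intro u v p
  induction p with
  | nil => rfl
  | @cons u c v h p ih =>
    show T.wt u c + (extT T ℓ).walkWeight (p.map (extHom T.g ℓ)) = T.wt u c + T.walkWeight p
    rw [ih]

lemma extT_dist_inl (u v : W) :
    (extT T ℓ).dist (Sum.inl u) (Sum.inl v) = T.dist u v := by
  classical
  obtain ⟨p, hp⟩ := (T.conn.preconnected u v).some.toPath
  have hinj : Function.Injective (extHom T.g ℓ) := fun a b hab => Sum.inl.inj hab
  have h1 := dist_eq (extT T ℓ) (p.map (extHom T.g ℓ))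
    (Walk.map_isPath_of_injective hinj hp)
  rw [extT_walkWeight_map] at h1
  rw [dist_eq T p hp]
  exact h1

lemma extT_dist_inr_inl (i : Bool) (v : W) :
    (extT T ℓ).dist (Sum.inr i) (Sum.inl v) = T.dist ℓ v := by
  classical
  obtain ⟨p, hp⟩ := (T.conn.preconnected ℓ v).some.toPath
  have hinj : Function.Injective (extHom T.g ℓ) := fun a b hab => Sum.inl.inj hab
  have hadj : (extT T ℓ).g.Adj (Sum.inr i) (Sum.inl ℓ) := rfl
  have hpath : (Walk.cons hadj (p.map (extHom T.g ℓ))).IsPath := by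
    refine Walk.IsPath.cons (Walk.map_isPath_of_injective hinj hp) ?_
    rw [Walk.support_map]
    simp only [List.mem_map, not_exists, not_and]
    intro y _ hy
    exact Sum.inl_ne_inr hy
  have h1 := dist_eq (extT T ℓ) _ hpath
  have h2 : (extT T ℓ).walkWeight (Walk.cons hadj (p.map (extHom T.g ℓ)))
      = T.walkWeight p := by
    show (0 : ℝ) + (extT T ℓ).walkWeight (p.map (extHom T.g ℓ)) = T.walkWeight p
    rw [extT_walkWeight_map]
    ring
  rw [dist_eq T p hp]
  exact h1.trans h2

lemma extT_dist_inr_inr (i j : Bool) (hij : i ≠ j) :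
    (extT T ℓ).dist (Sum.inr i) (Sum.inr j) = 0 := by
  have h1 : (extT T ℓ).g.Adj (Sum.inr i) (Sum.inl ℓ) := rfl
  have h2 : (extT T ℓ).g.Adj (Sum.inl ℓ) (Sum.inr j) := rfl
  have hpath : (Walk.cons h1 (Walk.cons h2 Walk.nil)).IsPath := by
    rw [Walk.isPath_def]
    simp [hij]
  rw [dist_eq (extT T ℓ) _ hpath]
  show (0 : ℝ) + ((0 : ℝ) + (0 : ℝ)) = 0
  ring

lemma extT_leaf_inr (i : Bool) : (extT T ℓ).IsLeaf (Sum.inr i) := by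
  refine ⟨Sum.inl ℓ, rfl, ?_⟩
  rintro (v | j) hy
  · exact congrArg Sum.inl (hy : v = ℓ)
  · exact (hy : False).elim

lemma extT_not_leaf_inl_base : ¬ (extT T ℓ).IsLeaf (Sum.inl ℓ) := by
  rintro ⟨y, hy, huniq⟩
  have h1 := huniq (Sum.inr true) rfl
  have h2 := huniq (Sum.inr false) rfl
  rw [← h2] at h1
  simp at h1

lemma extT_leaf_inl {u : W} (hu : T.IsLeaf u) (hne : u ≠ ℓ) :
    (extT T ℓ).IsLeaf (Sum.inl u) := by
  obtain ⟨n, hn, huniq⟩ := hu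
  refine ⟨Sum.inl n, hn, ?_⟩
  rintro (v | j) hy
  · exact congrArg Sum.inl (huniq v hy)
  · exact absurd (hy : u = ℓ) hne

lemma extT_leaf_inl_rev {u : W} (hu : (extT T ℓ).IsLeaf (Sum.inl u)) : T.IsLeaf u := by
  obtain ⟨y, hy, huniq⟩ := hu
  cases y with
  | inr j =>
    have h2 := huniq (Sum.inr !j) (hy : u = ℓ)
    simp at h2
  | inl n =>
    refine ⟨n, hy, ?_⟩
    intro v hv
    exact Sum.inl.inj (huniq (Sum.inl v) hv)

end ExtLemmas

section TwinRel

variable {V : Type} (G : SimpleGraph V) (x : V)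

lemma twin_adj_some_some (u v : V) :
    (SimpleGraph.fromRel (fun a b : Option V =>
      (∃ u v : V, a = some u ∧ b = some v ∧ G.Adj u v) ∨
      (∃ v : V, a = none ∧ b = some v ∧ G.Adj x v))).Adj (some u) (some v) ↔ G.Adj u v := by
  rw [SimpleGraph.fromRel_adj]
  constructor
  · rintro ⟨hne, (⟨u', v', hu', hv', hadj⟩ | ⟨v', hu', _, _⟩) |
      (⟨u', v', hu', hv', hadj⟩ | ⟨v', hu', _, _⟩)⟩
    · cases hu'; cases hv'; exact hadj
    · cases hu'
    · cases hu'; cases hv'; exact hadj.symm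
    · cases hu'
  · intro hadj
    exact ⟨by simpa using hadj.ne, Or.inl (Or.inl ⟨u, v, rfl, rfl, hadj⟩)⟩

lemma twin_adj_some_none (u : V) :
    (SimpleGraph.fromRel (fun a b : Option V =>
      (∃ u v : V, a = some u ∧ b = some v ∧ G.Adj u v) ∨
      (∃ v : V, a = none ∧ b = some v ∧ G.Adj x v))).Adj (some u) none ↔ G.Adj x u := by
  rw [SimpleGraph.fromRel_adj]
  constructor
  · rintro ⟨hne, (⟨u', v', _, hv', _⟩ | ⟨v', hu', _, _⟩) |
      (⟨u', v', hu', _, _⟩ | ⟨v', _, hv', hadj⟩)⟩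
    · cases hv'
    · cases hu'
    · cases hu'
    · cases hv'; exact hadj
  · intro hadj
    exact ⟨by simp, Or.inr (Or.inr ⟨u, rfl, rfl, hadj⟩)⟩

end TwinRel

end PCGAux

/-- If `G` is a PCG and `x` is a vertex of `G`, then the graph obtained from `G` by adding a
new vertex whose neighborhood is exactly the neighborhood of `x` (and which is not adjacent
to `x`) is also a PCG. The new graph lives on `Option V`, with `none` the new twin vertex. -/
theorem isPCG_addTwin {V : Type} [Fintype V] (G : SimpleGraph V) (h : IsPCG G) (x : V) :
    IsPCG (SimpleGraph.fromRel (fun a b : Option V =>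
      (∃ u v : V, a = some u ∧ b = some v ∧ G.Adj u v) ∨
      (∃ v : V, a = none ∧ b = some v ∧ G.Adj x v))) := by
  classical
  obtain ⟨W, hW, T0, a0, b0, f0, ha0, hinj0, hleaf0, hsurj0, hadj0⟩ := h
  set ℓ := f0 x with hℓ
  let T : WTree W := PCGAux.shift T0
  let f' : Option V → W ⊕ Bool := fun o => match o with
    | none => Sum.inr false
    | some v => if v = x then Sum.inr true else Sum.inl (f0 v)
  have hf'none : f' none = Sum.inr false := rfl
  have hf'x : f' (some x) = Sum.inr true := by simp [f']
  have hf'some : ∀ v, v ≠ x → f' (some v) = Sum.inl (f0 v) := fun v hv => by simp [f', hv]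
  have hne_ℓ : ∀ v, v ≠ x → f0 v ≠ ℓ := fun v hv hh => hv (hinj0 hh)
  have hdist : ∀ u v : V, u ≠ v →
      T.dist (f0 u) (f0 v) = T0.dist (f0 u) (f0 v) + 2 :=
    fun u v huv => PCGAux.shift_dist T0 (hleaf0 u) (hleaf0 v) (fun hh => huv (hinj0 hh))
  have hkey : ∀ u v : V, u ≠ v →
      (T.dist (f0 u) (f0 v) ∈ Set.Icc (a0 + 2) (b0 + 2) ↔ G.Adj u v) := by
    intro u v huv
    rw [hdist u v huv, hadj0 u v huv]
    simp only [Set.mem_Icc]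
    constructor <;> intro hh <;> exact ⟨by linarith [hh.1], by linarith [hh.2]⟩
  refine ⟨W ⊕ Bool, inferInstance, PCGAux.extT T ℓ, a0 + 2, b0 + 2, f', by linarith, ?_, ?_, ?_, ?_⟩
  · -- injectivity
    rintro (_ | u) (_ | v) he
    · rfl
    · exfalso
      by_cases hv : v = x
      · rw [hf'none, hv, hf'x] at he; simp at he
      · rw [hf'none, hf'some v hv] at he; simp at he
    · exfalso
      by_cases hu : u = x
      · rw [hf'none, hu, hf'x] at he; simp at he
      · rw [hf'none, hf'some u hu] at he; simp at he
    · by_cases hu : u = x <;> by_cases hv : v = x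
      · rw [hu, hv]
      · rw [hu, hf'x, hf'some v hv] at he; simp at he
      · rw [hv, hf'x, hf'some u hu] at he; simp at he
      · rw [hf'some u hu, hf'some v hv] at he
        exact congrArg some (hinj0 (Sum.inl.inj he))
  · -- all images are leaves
    rintro (_ | v)
    · exact PCGAux.extT_leaf_inr T ℓ false
    · by_cases hv : v = x
      · subst hv
        rw [hf'x]
        exact PCGAux.extT_leaf_inr T ℓ true
      · rw [hf'some v hv]
        exact PCGAux.extT_leaf_inl T ℓ (hleaf0 v) (hne_ℓ v hv)
  · -- surjectivity onto leaves
    rintro (u | i) hw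
    · have hu : T.IsLeaf u := PCGAux.extT_leaf_inl_rev T ℓ hw
      have hne : u ≠ ℓ := fun hh => PCGAux.extT_not_leaf_inl_base T ℓ (hh ▸ hw)
      obtain ⟨v, hv⟩ := hsurj0 u hu
      have hvx : v ≠ x := fun hh => hne (by rw [← hv, hh])
      exact ⟨some v, by rw [hf'some v hvx, hv]⟩
    · cases i
      · exact ⟨none, rfl⟩
      · exact ⟨some x, hf'x⟩
  · -- adjacency
    rintro (_ | u) (_ | v) ho
    · exact absurd rfl ho
    · -- none, some v
      rw [SimpleGraph.adj_comm, PCGAux.twin_adj_some_none G x v]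
      by_cases hv : v = x
      · rw [hv, hf'x, hf'none, PCGAux.extT_dist_inr_inr T ℓ false true (by simp)]
        simp only [Set.mem_Icc]
        constructor
        · intro hh; exact absurd hh (G.loopless.irrefl x)
        · intro hh; linarith [hh.1]
      · rw [hf'some v hv, hf'none, PCGAux.extT_dist_inr_inl T ℓ false (f0 v), hℓ]
        exact (hkey x v (fun hh => hv hh.symm)).symm
    · -- some u, none
      rw [PCGAux.twin_adj_some_none G x u]
      by_cases hu : u = x
      · rw [hu, hf'x, hf'none, PCGAux.extT_dist_inr_inr T ℓ true false (by simp)]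
        simp only [Set.mem_Icc]
        constructor
        · intro hh; exact absurd hh (G.loopless.irrefl x)
        · intro hh; linarith [hh.1]
      · rw [hf'some u hu, hf'none,
          PCGAux.dist_symm (PCGAux.extT T ℓ) (Sum.inl (f0 u)) (Sum.inr false),
          PCGAux.extT_dist_inr_inl T ℓ false (f0 u), hℓ]
        exact (hkey x u (fun hh => hu hh.symm)).symm
    · -- some u, some v
      have huv : u ≠ v := fun hh => ho (congrArg some hh)
      rw [PCGAux.twin_adj_some_some G x u v]
      by_cases hu : u = x <;> by_cases hv : v = x
      · exact absurd (hu.trans hv.symm) huv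
      · rw [hu, hf'x, hf'some v hv, PCGAux.extT_dist_inr_inl T ℓ true (f0 v), hℓ]
        exact (hkey x v (fun hh => hv hh.symm)).symm
      · rw [hv, hf'x, hf'some u hu,
          PCGAux.dist_symm (PCGAux.extT T ℓ) (Sum.inl (f0 u)) (Sum.inr true),
          PCGAux.extT_dist_inr_inl T ℓ true (f0 u), hℓ, G.adj_comm u x]
        exact (hkey x u (fun hh => hu hh.symm)).symm
      · rw [hf'some u hu, hf'some v hv, PCGAux.extT_dist_inl T ℓ (f0 u) (f0 v)]
        exact (hkey u v huv).symm
end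

section
/- For any graph G and k ≥ 1, G is a k-OR-PCG with trees T_1,…,T_k and intervals I_1,…,I_k if and only if there exist k trees T''_1,…,T''_k and a single common interval I such that G is the k-OR-PCG of (T''_1,…,T''_k) each with interval I. The analogous statement holds for k-AND-PCG. -/
open SimpleGraph

/-- `G` is realized as the `k`-OR-PCG of trees `T i` with respective intervals `I i`:
there is an edge `{u,v}` iff `d_{T i}(u,v) ∈ I i` for some `i`. -/
def IsORPCGIntervals {V : Type} (k : ℕ) (G : SimpleGraph V) (I : Fin k → Set ℝ) : Prop :=
  ∃ (W : Fin k → Type) (_ : ∀ i, Fintype (W i)) (T : ∀ i, WTree (W i)) (f : ∀ i, V → W i),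
    (∀ i, Function.Injective (f i)) ∧ (∀ i v, (T i).IsLeaf (f i v)) ∧
    (∀ i w, (T i).IsLeaf w → ∃ v, f i v = w) ∧
    ∀ u v, u ≠ v → (G.Adj u v ↔ ∃ i, (T i).dist (f i u) (f i v) ∈ I i)

/-- `G` is realized as the `k`-AND-PCG of trees `T i` with respective intervals `I i`:
there is an edge `{u,v}` iff `d_{T i}(u,v) ∈ I i` for all `i`. -/
def IsANDPCGIntervals {V : Type} (k : ℕ) (G : SimpleGraph V) (I : Fin k → Set ℝ) : Prop :=
  ∃ (W : Fin k → Type) (_ : ∀ i, Fintype (W i)) (T : ∀ i, WTree (W i)) (f : ∀ i, V → W i),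
    (∀ i, Function.Injective (f i)) ∧ (∀ i v, (T i).IsLeaf (f i v)) ∧
    (∀ i w, (T i).IsLeaf w → ∃ v, f i v = w) ∧
    ∀ u v, u ≠ v → (G.Adj u v ↔ ∀ i, (T i).dist (f i u) (f i v) ∈ I i)

section Aux

open SimpleGraph
open scoped Classical

namespace WTree

variable {W : Type}

/-- Scale all weights by `c` and add `δ/2` for every leaf endpoint of every edge. -/
noncomputable def scale (T : WTree W) (c δ : ℝ) (hc : 0 ≤ c) (hδ : 0 ≤ δ) : WTree W where
  g := T.g
  conn := T.conn
  acyclic := T.acyclic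
  wt u v := c * T.wt u v +
    δ / 2 * ((if T.IsLeaf u then (1 : ℝ) else 0) + (if T.IsLeaf v then (1 : ℝ) else 0))
  wt_symm u v := by rw [T.wt_symm]; ring
  wt_nonneg u v := by
    have h1 := T.wt_nonneg u v
    have h2 : (0:ℝ) ≤ (if T.IsLeaf u then (1 : ℝ) else 0) := by split <;> norm_num
    have h3 : (0:ℝ) ≤ (if T.IsLeaf v then (1 : ℝ) else 0) := by split <;> norm_num
    have := mul_nonneg (by linarith : (0:ℝ) ≤ δ / 2) (add_nonneg h2 h3)
    nlinarith

lemma isLeaf_scale (T : WTree W) (c δ : ℝ) (hc : 0 ≤ c) (hδ : 0 ≤ δ) (v : W) :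
    (T.scale c δ hc hδ).IsLeaf v ↔ T.IsLeaf v := Iff.rfl

lemma dist_eq_walkWeight (T : WTree W) {u v : W} (p : T.g.Walk u v) (hp : p.IsPath) :
    T.dist u v = T.walkWeight p := by
  unfold WTree.dist
  have h2 : ((T.conn.preconnected u v).some.toPath : T.g.Path u v) = ⟨p, hp⟩ :=
    T.acyclic.path_unique _ _
  rw [h2]

/-- An interior vertex of a path is not a leaf. -/
lemma not_isLeaf_interior (T : WTree W) : ∀ {x y : W} (p : T.g.Walk x y), p.IsPath →
    ∀ v ∈ p.support, v ≠ x → v ≠ y → ¬ T.IsLeaf v := by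
  intro x y p
  induction p with
  | nil =>
    intro _ v hv hvx _
    simp only [Walk.support_nil, List.mem_singleton] at hv
    exact absurd hv hvx
  | @cons x w y h q ih =>
    intro hp v hv hvx hvy hleaf
    rw [Walk.cons_isPath_iff] at hp
    obtain ⟨hq, hxq⟩ := hp
    simp only [Walk.support_cons, List.mem_cons] at hv
    rcases hv with rfl | hv
    · exact hvx rfl
    · by_cases hvw : v = w
      · subst hvw
        cases q with
        | nil => exact hvy rfl
        | @cons _ w2 _ h2 r =>
          have hx : T.g.Adj v x := h.symm
          have hxw2 : x ≠ w2 := by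
            intro hxe
            apply hxq
            rw [hxe]
            simp [Walk.support_cons]
          exact hxw2 (hleaf.unique hx h2)
      · exact ih hq v hv hvw hvy hleaf

lemma scale_walkWeight_aux (T : WTree W) (c δ : ℝ) (hc : 0 ≤ c) (hδ : 0 ≤ δ) :
    ∀ {z y : W} (q : T.g.Walk z y), q.IsPath → T.IsLeaf y → z ≠ y →
      (∀ v ∈ q.support, v ≠ y → ¬ T.IsLeaf v) →
      (T.scale c δ hc hδ).walkWeight q = c * T.walkWeight q + δ / 2 := by
  intro z y q
  induction q with
  | nil => intro _ _ hzy _; exact absurd rfl hzy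
  | @cons z w y h r ih =>
    intro hp hy hzy hint
    rw [Walk.cons_isPath_iff] at hp
    obtain ⟨hr, hzr⟩ := hp
    have hz : ¬ T.IsLeaf z := hint z (by simp [Walk.support_cons]) hzy
    cases r with
    | nil =>
      simp only [WTree.walkWeight, WTree.scale, if_neg hz, if_pos hy]
      ring
    | @cons _ w2 _ h2 r2 =>
      have hwy : w ≠ y := by
        intro hwe
        subst hwe
        rw [Walk.isPath_iff_eq_nil] at hr
        simp at hr
      have hw : ¬ T.IsLeaf w := hint w (by simp [Walk.support_cons]) hwy
      have hrec := ih hr hy hwy (fun v hv hvy => hint v (by simp [Walk.support_cons]; right; simpa using hv) hvy)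
      simp only [WTree.walkWeight, WTree.scale, if_neg hz, if_neg hw] at hrec ⊢
      rw [hrec]
      ring

lemma scale_walkWeight (T : WTree W) (c δ : ℝ) (hc : 0 ≤ c) (hδ : 0 ≤ δ) :
    ∀ {x y : W} (p : T.g.Walk x y), p.IsPath → T.IsLeaf x → T.IsLeaf y → x ≠ y →
      (T.scale c δ hc hδ).walkWeight p = c * T.walkWeight p + δ := by
  intro x y p
  cases p with
  | nil => intro _ _ _ hxy; exact absurd rfl hxy
  | @cons x w y h q =>
    intro hp hx hy hxy
    have hp' := hp
    rw [Walk.cons_isPath_iff] at hp'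
    obtain ⟨hq, hxq⟩ := hp'
    by_cases hwy : w = y
    · subst hwy
      have hqnil : q = Walk.nil := by
        by_contra hne
        have hwsup : w ∈ q.support := q.start_mem_support
        have : ¬ T.IsLeaf w ∨ q = Walk.nil := by
          cases q with
          | nil => right; rfl
          | @cons _ w2 _ h2 r =>
            left
            intro hleaf
            have hxw2 : x ≠ w2 := by
              intro hxe
              apply hxq
              rw [hxe]
              simp [Walk.support_cons]
            exact hxw2 (hleaf.unique h.symm h2)
        rcases this with hnl | hnil
        · exact hnl hy
        · exact hne hnil
      subst hqnil
      simp only [WTree.walkWeight, WTree.scale, if_pos hx, if_pos hy]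
      ring
    · have hwnl : ¬ T.IsLeaf w := by
        refine T.not_isLeaf_interior (Walk.cons h q) hp w (by simp [Walk.support_cons]) ?_ hwy
        intro hwe; exact hxq (hwe ▸ q.start_mem_support)
      have hrec := T.scale_walkWeight_aux c δ hc hδ q hq hy hwy ?_
      · simp only [WTree.walkWeight, WTree.scale, if_pos hx, if_neg hwnl] at hrec ⊢
        rw [hrec]
        ring
      · intro v hv hvy
        have hvx : v ≠ x := by rintro rfl; exact hxq hv
        exact T.not_isLeaf_interior (Walk.cons h q) hp v (by simp [Walk.support_cons, hv]) hvx hvy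

lemma scale_dist (T : WTree W) (c δ : ℝ) (hc : 0 ≤ c) (hδ : 0 ≤ δ) {x y : W}
    (hx : T.IsLeaf x) (hy : T.IsLeaf y) (hxy : x ≠ y) :
    (T.scale c δ hc hδ).dist x y = c * T.dist x y + δ := by
  classical
  set p : T.g.Path x y := ((T.conn.preconnected x y).some.toPath : T.g.Path x y) with hpdef
  have h1 : T.dist x y = T.walkWeight p.val := T.dist_eq_walkWeight p.val p.prop
  have h2 : (T.scale c δ hc hδ).dist x y = (T.scale c δ hc hδ).walkWeight p.val :=
    (T.scale c δ hc hδ).dist_eq_walkWeight p.val p.prop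
  rw [h1, h2]
  exact T.scale_walkWeight c δ hc hδ p.val p.prop hx hy hxy

end WTree

end Aux

/-- Given `k` trees with leaf maps and `k` intervals `[A i, B i]`, one can rescale
the trees so that a single common interval `[a, b]` (with `0 ≤ a`) cuts out exactly
the same leaf-distance conditions. -/
lemma exists_common_interval {V : Type} [Fintype V] {k : ℕ} (hk : 1 ≤ k)
    {W : Fin k → Type} (T : ∀ i, WTree (W i)) (f : ∀ i, V → W i)
    (hleaf : ∀ i v, (T i).IsLeaf (f i v)) (hinj : ∀ i, Function.Injective (f i))
    (A B : Fin k → ℝ) :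
    ∃ (T' : ∀ i, WTree (W i)) (a b : ℝ), 0 ≤ a ∧
      (∀ i v, ((T' i).IsLeaf v ↔ (T i).IsLeaf v)) ∧
      ∀ i (u v : V), u ≠ v →
        ((T' i).dist (f i u) (f i v) ∈ Set.Icc a b ↔
          (T i).dist (f i u) (f i v) ∈ Set.Icc (A i) (B i)) := by
  classical
  haveI : Nonempty (Fin k) := ⟨⟨0, hk⟩⟩
  set D : Fin k → Finset ℝ := fun i =>
    Finset.image (fun p : V × V => (T i).dist (f i p.1) (f i p.2)) Finset.univ with hD
  have hηex : ∀ i, ∃ η : ℝ, 0 < η ∧ ∀ d ∈ D i, d < A i → d ≤ A i - η := by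
    intro i
    set S : Finset ℝ := (D i).filter (fun d => d < A i) with hS
    by_cases h : S.Nonempty
    · refine ⟨min 1 (A i - S.max' h), ?_, ?_⟩
      · have hm := Finset.mem_filter.mp (S.max'_mem h)
        exact lt_min one_pos (by linarith [hm.2])
      · intro d hd hdA
        have h1 : d ≤ S.max' h := S.le_max' d (by rw [hS, Finset.mem_filter]; exact ⟨hd, hdA⟩)
        have h2 : min 1 (A i - S.max' h) ≤ A i - S.max' h := min_le_right _ _
        linarith
    · refine ⟨1, one_pos, fun d hd hdA => absurd ⟨d, ?_⟩ h⟩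
      rw [hS, Finset.mem_filter]; exact ⟨hd, hdA⟩
  choose η hηpos hηgap using hηex
  set p : Fin k → ℝ := fun i => A i - η i / 2 with hp
  set q : Fin k → ℝ := fun i => if A i ≤ B i then B i else A i - η i / 4 with hq
  have hpq : ∀ i, p i < q i := by
    intro i
    rw [hp, hq]
    dsimp only
    split
    · have := hηpos i; linarith
    · have := hηpos i; linarith
  set c : Fin k → ℝ := fun i => (q i - p i)⁻¹ with hc
  have hcpos : ∀ i, 0 < c i := fun i => inv_pos.mpr (by linarith [hpq i])
  set a : ℝ := max 0 (Finset.univ.sup' Finset.univ_nonempty (fun i => c i * p i)) with ha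
  set b : ℝ := a + 1 with hb
  set δ : Fin k → ℝ := fun i => a - c i * p i with hδ
  have hδnn : ∀ i, 0 ≤ δ i := by
    intro i
    have h1 : c i * p i ≤ Finset.univ.sup' Finset.univ_nonempty (fun i => c i * p i) := by
      exact Finset.le_sup' (fun j => c j * p j) (Finset.mem_univ i)
    have h2 : Finset.univ.sup' Finset.univ_nonempty (fun i => c i * p i) ≤ a :=
      le_max_right _ _
    rw [hδ]
    dsimp only
    linarith
  have hann : 0 ≤ a := le_max_left _ _
  refine ⟨fun i => (T i).scale (c i) (δ i) (hcpos i).le (hδnn i), a, b, hann,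
    fun i v => WTree.isLeaf_scale _ _ _ _ _ _, ?_⟩
  intro i u v huv
  have hfne : f i u ≠ f i v := fun he => huv (hinj i he)
  rw [WTree.scale_dist (T i) (c i) (δ i) (hcpos i).le (hδnn i)
    (hleaf i u) (hleaf i v) hfne]
  set d : ℝ := (T i).dist (f i u) (f i v) with hd
  have hdD : d ∈ D i := by
    rw [hD]
    exact Finset.mem_image.mpr ⟨(u, v), Finset.mem_univ _, rfl⟩
  have hcq : c i * q i = c i * p i + 1 := by
    have : c i * (q i - p i) = 1 := inv_mul_cancel₀ (by linarith [hpq i])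
    nlinarith
  have key1 : c i * d + δ i ∈ Set.Icc a b ↔ d ∈ Set.Icc (p i) (q i) := by
    have hδi : δ i = a - c i * p i := rfl
    constructor
    · rintro ⟨h1, h2⟩
      constructor
      · have : c i * p i ≤ c i * d := by rw [hδi] at h1; linarith
        exact le_of_mul_le_mul_left this (hcpos i)
      · have : c i * d ≤ c i * q i := by rw [hδi] at h1 h2; rw [hb] at h2; linarith [hcq]
        exact le_of_mul_le_mul_left this (hcpos i)
    · rintro ⟨h1, h2⟩
      have h1' : c i * p i ≤ c i * d := mul_le_mul_of_nonneg_left h1 (hcpos i).le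
      have h2' : c i * d ≤ c i * q i := mul_le_mul_of_nonneg_left h2 (hcpos i).le
      rw [hδi]
      constructor
      · linarith
      · rw [hb]; linarith [hcq]
  rw [key1]
  by_cases hAB : A i ≤ B i
  · have hqi : q i = B i := if_pos hAB
    have hpi : p i = A i - η i / 2 := rfl
    constructor
    · rintro ⟨h1, h2⟩
      refine ⟨?_, hqi ▸ h2⟩
      by_contra hlt
      push_neg at hlt
      have := hηgap i d hdD hlt
      have := hηpos i
      rw [hpi] at h1
      linarith
    · rintro ⟨h1, h2⟩
      have := hηpos i
      exact ⟨by rw [hpi]; linarith, by rw [hqi]; exact h2⟩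
  · push_neg at hAB
    have hqi : q i = A i - η i / 4 := if_neg (not_le.mpr hAB)
    have hpi : p i = A i - η i / 2 := rfl
    constructor
    · rintro ⟨h1, h2⟩
      exfalso
      have hdlt : d < A i := by rw [hqi] at h2; have := hηpos i; linarith
      have := hηgap i d hdD hdlt
      have := hηpos i
      rw [hpi] at h1
      linarith
    · rintro ⟨h1, h2⟩
      exact absurd (le_trans h1 h2) (not_le.mpr hAB)

/-- A graph is a `k`-OR-PCG (resp. `k`-AND-PCG) with trees `T_1,…,T_k` and intervals
`I_1,…,I_k` iff there exist `k` trees and a single common interval `I` realizing it. -/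
theorem orpcg_andpcg_single_interval {V : Type} [Fintype V] (k : ℕ) (hk : 1 ≤ k)
    (G : SimpleGraph V) :
    ((∃ I : Fin k → Set ℝ, (∀ i, ∃ a b : ℝ, 0 ≤ a ∧ I i = Set.Icc a b) ∧
        IsORPCGIntervals k G I) ↔
      (∃ a b : ℝ, 0 ≤ a ∧ IsORPCGIntervals k G (fun _ => Set.Icc a b))) ∧
    ((∃ I : Fin k → Set ℝ, (∀ i, ∃ a b : ℝ, 0 ≤ a ∧ I i = Set.Icc a b) ∧
        IsANDPCGIntervals k G I) ↔
      (∃ a b : ℝ, 0 ≤ a ∧ IsANDPCGIntervals k G (fun _ => Set.Icc a b))) := by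
  constructor
  · constructor
    · rintro ⟨I, hI, Wk, Fi, T, f, hinj, hleaf, hsurj, hadj⟩
      choose A B hA hIeq using hI
      obtain ⟨T', a, b, ha, hliff, hdist⟩ :=
        exists_common_interval hk T f hleaf hinj A B
      refine ⟨a, b, ha, Wk, Fi, T', f, hinj, fun i v => (hliff i _).mpr (hleaf i v),
        fun i w hw => hsurj i w ((hliff i w).mp hw), fun u v huv => ?_⟩
      rw [hadj u v huv]
      exact exists_congr fun i => by rw [hIeq i]; exact (hdist i u v huv).symm
    · rintro ⟨a, b, ha, h⟩
      exact ⟨fun _ => Set.Icc a b, fun i => ⟨a, b, ha, rfl⟩, h⟩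
  · constructor
    · rintro ⟨I, hI, Wk, Fi, T, f, hinj, hleaf, hsurj, hadj⟩
      choose A B hA hIeq using hI
      obtain ⟨T', a, b, ha, hliff, hdist⟩ :=
        exists_common_interval hk T f hleaf hinj A B
      refine ⟨a, b, ha, Wk, Fi, T', f, hinj, fun i v => (hliff i _).mpr (hleaf i v),
        fun i w hw => hsurj i w ((hliff i w).mp hw), fun u v huv => ?_⟩
      rw [hadj u v huv]
      exact forall_congr' fun i => by rw [hIeq i]; exact (hdist i u v huv).symm
    · rintro ⟨a, b, ha, h⟩
      exact ⟨fun _ => Set.Icc a b, fun i => ⟨a, b, ha, rfl⟩, h⟩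
end

section
/- If a graph G on n vertices is a k-interval-PCG, then its complement graph is a (k+1)-interval-PCG. -/
open SimpleGraph

lemma WTree.walkWeight_nonneg_s6 {W : Type} (T : WTree W) {u v : W} (p : T.g.Walk u v) :
    0 ≤ T.walkWeight p := by
  induction p with
  | nil => simp [WTree.walkWeight]
  | cons h p ih => exact add_nonneg (T.wt_nonneg _ _) ih

lemma WTree.dist_nonneg' {W : Type} (T : WTree W) (u v : W) : 0 ≤ T.dist u v := by
  unfold WTree.dist
  exact T.walkWeight_nonneg_s6 _

/-- If a graph `G` is a `k`-interval-PCG, then its complement is a `(k+1)`-interval-PCG. -/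
theorem compl_isKIntervalPCG {V : Type} [Fintype V] (k : ℕ) (G : SimpleGraph V)
    (h : IsKIntervalPCG k G) : IsKIntervalPCG (k + 1) Gᶜ := by
  classical
  obtain ⟨W, _, T, I, f, hInt, hDisj, hf, hleaf, hsurj, hadj⟩ := h
  choose a b ha hI using hInt
  set label : ℝ → ℕ :=
    fun x => (Finset.univ.filter (fun i : Fin k => b i < x)).card with hlabel
  have label_le : ∀ x, label x ≤ k := by
    intro x
    simpa using Finset.card_filter_le (Finset.univ : Finset (Fin k)) _
  have label_mono : ∀ {x y : ℝ}, x ≤ y → label x ≤ label y := by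
    intro x y hxy
    apply Finset.card_le_card
    intro i hi
    simp only [Finset.mem_filter] at hi ⊢
    exact ⟨hi.1, lt_of_lt_of_le hi.2 hxy⟩
  have gap : ∀ x y z : ℝ, (∀ i, x ∉ I i) → (∀ i, y ∉ I i) → label x = label y →
      x ≤ z → z ≤ y → ∀ i, z ∉ I i := by
    intro x y z hx hy hlab hxz hzy i hz
    rw [hI i] at hz
    have hab : a i ≤ b i := le_trans hz.1 hz.2
    have hxa : x < a i := by
      by_contra hle
      exact hx i (by rw [hI i]; exact ⟨le_of_not_gt hle, le_trans hxz hz.2⟩)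
    have hyb : b i < y := by
      by_contra hle
      exact hy i (by rw [hI i]; exact ⟨le_trans hz.1 hzy, le_of_not_gt hle⟩)
    have hsub : (Finset.univ.filter (fun j : Fin k => b j < x)) ⊂
        (Finset.univ.filter (fun j : Fin k => b j < y)) := by
      constructor
      · intro j hj
        simp only [Finset.mem_filter] at hj ⊢
        exact ⟨hj.1, lt_of_lt_of_le hj.2 (le_trans hxz hzy)⟩
      · intro hcon
        have hi := hcon (by simp only [Finset.mem_filter]; exact ⟨Finset.mem_univ i, hyb⟩)
        simp only [Finset.mem_filter] at hi
        exact absurd hi.2 (not_lt.mpr (le_trans (le_of_lt hxa) hab))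
    exact absurd hlab (ne_of_lt (Finset.card_lt_card hsub))
  set D : Finset ℝ :=
    Finset.image (fun p : V × V => T.dist (f p.1) (f p.2)) Finset.univ with hD
  have hDnonneg : ∀ x ∈ D, (0:ℝ) ≤ x := by
    intro x hx
    rw [hD] at hx
    obtain ⟨p, _, hp⟩ := Finset.mem_image.mp hx
    rw [← hp]; exact T.dist_nonneg' _ _
  set S : Fin (k+1) → Finset ℝ :=
    fun c => D.filter (fun x => (∀ i, x ∉ I i) ∧ label x = c.val) with hS
  set J : Fin (k+1) → Set ℝ := fun c =>
    if hc : (S c).Nonempty then Set.Icc ((S c).min' hc) ((S c).max' hc)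
    else Set.Icc 1 0 with hJdef
  have hSprop : ∀ c, ∀ x ∈ S c, x ∈ D ∧ (∀ i, x ∉ I i) ∧ label x = c.val := by
    intro c x hx
    rw [hS] at hx
    simp only [Finset.mem_filter] at hx
    exact ⟨hx.1, hx.2.1, hx.2.2⟩
  have hJprop : ∀ c, ∀ x ∈ J c, (∀ i, x ∉ I i) ∧ label x = c.val := by
    intro c x hx
    rw [hJdef] at hx
    dsimp only at hx
    by_cases hc : (S c).Nonempty
    · rw [dif_pos hc] at hx
      obtain ⟨hmD, hmI, hmlab⟩ := hSprop c _ ((S c).min'_mem hc)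
      obtain ⟨hMD, hMI, hMlab⟩ := hSprop c _ ((S c).max'_mem hc)
      refine ⟨gap _ _ _ hmI hMI (hmlab.trans hMlab.symm) hx.1 hx.2, ?_⟩
      exact le_antisymm (hMlab ▸ label_mono hx.2) (hmlab ▸ label_mono hx.1)
    · rw [dif_neg hc] at hx
      exact absurd hx (by simp)
  refine ⟨W, ‹_›, T, J, f, ?_, ?_, hf, hleaf, hsurj, ?_⟩
  · intro c
    rw [hJdef]
    dsimp only
    by_cases hc : (S c).Nonempty
    · refine ⟨(S c).min' hc, (S c).max' hc, ?_, by rw [dif_pos hc]⟩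
      exact hDnonneg _ (hSprop c _ ((S c).min'_mem hc)).1
    · exact ⟨1, 0, by norm_num, by rw [dif_neg hc]⟩
  · intro c c' hne
    rw [Function.onFun, Set.disjoint_left]
    intro x hx hx'
    exact hne (Fin.ext (((hJprop c x hx).2.symm).trans (hJprop c' x hx').2))
  · intro u v huv
    rw [SimpleGraph.compl_adj]
    constructor
    · rintro ⟨-, hG⟩
      have hout : ∀ i, T.dist (f u) (f v) ∉ I i := by
        intro i hi
        exact hG ((hadj u v huv).mpr ⟨i, hi⟩)
      set d := T.dist (f u) (f v) with hd
      have hdD : d ∈ D := by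
        rw [hD]
        exact Finset.mem_image.mpr ⟨(u, v), Finset.mem_univ _, rfl⟩
      set c : Fin (k+1) := ⟨label d, Nat.lt_succ_of_le (label_le d)⟩ with hc
      have hdS : d ∈ S c := by
        rw [hS]
        exact Finset.mem_filter.mpr ⟨hdD, hout, rfl⟩
      have hcne : (S c).Nonempty := ⟨d, hdS⟩
      refine ⟨c, ?_⟩
      rw [hJdef]
      dsimp only
      rw [dif_pos hcne]
      exact ⟨(S c).min'_le _ hdS, (S c).le_max' _ hdS⟩
    · rintro ⟨c, hdJ⟩
      refine ⟨huv, fun hG => ?_⟩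
      obtain ⟨i, hi⟩ := (hadj u v huv).mp hG
      exact (hJprop c _ hdJ).1 i hi
end

section
/- If a graph G is a k-AND-PCG, then its complement graph is a 2k-OR-PCG. -/
open SimpleGraph

namespace WTree
variable {W : Type}

lemma walkWeight_nonneg_s16 (T : WTree W) : ∀ {u v} (p : T.g.Walk u v), 0 ≤ T.walkWeight p
  | _, _, .nil => le_refl 0
  | _, _, .cons _ p => add_nonneg (T.wt_nonneg _ _) (T.walkWeight_nonneg_s16 p)

lemma walkWeight_append_s16 (T : WTree W) : ∀ {u v x} (p : T.g.Walk u v) (q : T.g.Walk v x),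
    T.walkWeight (p.append q) = T.walkWeight p + T.walkWeight q
  | _, _, _, .nil, q => by simp [walkWeight]
  | _, _, _, .cons h p, q => by
      simp [SimpleGraph.Walk.cons_append, walkWeight, walkWeight_append_s16 T p q]; ring

lemma walkWeight_reverse_s16 (T : WTree W) : ∀ {u v} (p : T.g.Walk u v),
    T.walkWeight p.reverse = T.walkWeight p
  | _, _, .nil => rfl
  | _, _, .cons (u := a) (v := b) h p => by
      rw [SimpleGraph.Walk.reverse_cons, walkWeight_append_s16]
      simp [walkWeight, walkWeight_reverse_s16 T p, T.wt_symm a b]; ring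

lemma dist_nonneg'_s16 (T : WTree W) (u v : W) : 0 ≤ T.dist u v :=
  T.walkWeight_nonneg_s16 _

lemma dist_symm_s16 (T : WTree W) (u v : W) : T.dist u v = T.dist v u := by
  classical
  unfold dist
  set p : T.g.Path u v := (T.conn.preconnected u v).some.toPath
  set q : T.g.Path v u := (T.conn.preconnected v u).some.toPath
  have hpq : p = q.reverse := T.acyclic.path_unique p q.reverse
  rw [hpq]
  simpa using T.walkWeight_reverse_s16 (q : T.g.Walk v u)

end WTree

lemma compl_pcg_split {V : Type} [Fintype V] (G : SimpleGraph V) (h : IsPCG G) :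
    ∃ G1 G2 : SimpleGraph V, IsPCG G1 ∧ IsPCG G2 ∧ Gᶜ = G1 ⊔ G2 := by
  classical
  obtain ⟨W, _, T, a, b, f, ha, hinj, hlf, hsurj, hadj⟩ := h
  set S : Finset ℝ := Finset.image (fun p : V × V => T.dist (f p.1) (f p.2)) Finset.univ with hS
  set a₁ : ℝ := if h : (S.filter (fun x => x < a)).Nonempty
    then (S.filter (fun x => x < a)).max' h else -1 with ha₁
  set M : ℝ := if h : S.Nonempty then S.max' h else 0 with hM
  set b₂ : ℝ := if h : (S.filter (fun x => b < x)).Nonempty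
    then (S.filter (fun x => b < x)).min' h else M + 1 with hb₂
  have hSnn : ∀ x ∈ S, (0:ℝ) ≤ x := by
    intro x hx
    simp only [hS, Finset.mem_image] at hx
    obtain ⟨p, -, rfl⟩ := hx
    exact T.dist_nonneg'_s16 _ _
  have hM0 : 0 ≤ M := by
    by_cases h : S.Nonempty
    · rw [hM, dif_pos h]; exact hSnn _ (S.max'_mem h)
    · rw [hM, dif_neg h]
  have hmemS : ∀ u v : V, T.dist (f u) (f v) ∈ S := by
    intro u v
    simp only [hS, Finset.mem_image]
    exact ⟨(u, v), Finset.mem_univ _, rfl⟩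
  have key1 : ∀ u v : V, T.dist (f u) (f v) ∈ Set.Icc 0 a₁ ↔ T.dist (f u) (f v) < a := by
    intro u v
    set d := T.dist (f u) (f v) with hd
    have hd0 : 0 ≤ d := T.dist_nonneg'_s16 _ _
    constructor
    · rintro ⟨-, hle⟩
      by_cases h : (S.filter (fun x => x < a)).Nonempty
      · rw [ha₁, dif_pos h] at hle
        have := (S.filter (fun x => x < a)).max'_mem h
        exact lt_of_le_of_lt hle (Finset.mem_filter.mp this).2
      · rw [ha₁, dif_neg h] at hle; linarith
    · intro hlt
      have hmem : d ∈ S.filter (fun x => x < a) :=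
        Finset.mem_filter.mpr ⟨hmemS u v, hlt⟩
      have h : (S.filter (fun x => x < a)).Nonempty := ⟨d, hmem⟩
      refine ⟨hd0, ?_⟩
      rw [ha₁, dif_pos h]
      exact Finset.le_max' _ _ hmem
  have key2 : ∀ u v : V, T.dist (f u) (f v) ∈ Set.Icc b₂ M ↔ b < T.dist (f u) (f v) := by
    intro u v
    set d := T.dist (f u) (f v) with hd
    constructor
    · rintro ⟨hge, hle⟩
      by_cases h : (S.filter (fun x => b < x)).Nonempty
      · rw [hb₂, dif_pos h] at hge
        have := (S.filter (fun x => b < x)).min'_mem h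
        exact lt_of_lt_of_le (Finset.mem_filter.mp this).2 hge
      · rw [hb₂, dif_neg h] at hge; linarith
    · intro hlt
      have hmem : d ∈ S.filter (fun x => b < x) :=
        Finset.mem_filter.mpr ⟨hmemS u v, hlt⟩
      have h : (S.filter (fun x => b < x)).Nonempty := ⟨d, hmem⟩
      constructor
      · rw [hb₂, dif_pos h]; exact Finset.min'_le _ _ hmem
      · have hSne : S.Nonempty := ⟨d, hmemS u v⟩
        rw [hM, dif_pos hSne]
        exact Finset.le_max' _ _ (hmemS u v)
  have hb₂0 : 0 ≤ b₂ := by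
    by_cases h : (S.filter (fun x => b < x)).Nonempty
    · rw [hb₂, dif_pos h]
      exact hSnn _ (Finset.mem_filter.mp ((S.filter (fun x => b < x)).min'_mem h)).1
    · rw [hb₂, dif_neg h]; linarith
  refine ⟨
    { Adj := fun u v => u ≠ v ∧ T.dist (f u) (f v) ∈ Set.Icc 0 a₁,
      symm := by
        constructor; intro u v ⟨hne, hd⟩
        exact ⟨hne.symm, by rwa [T.dist_symm_s16 (f v) (f u)]⟩,
      loopless := ⟨fun u hu => hu.1 rfl⟩ },
    { Adj := fun u v => u ≠ v ∧ T.dist (f u) (f v) ∈ Set.Icc b₂ M,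
      symm := by
        constructor; intro u v ⟨hne, hd⟩
        exact ⟨hne.symm, by rwa [T.dist_symm_s16 (f v) (f u)]⟩,
      loopless := ⟨fun u hu => hu.1 rfl⟩ }, ?_, ?_, ?_⟩
  · exact ⟨W, ‹_›, T, 0, a₁, f, le_refl 0, hinj, hlf, hsurj,
      fun u v huv => ⟨fun h => h.2, fun h => ⟨huv, h⟩⟩⟩
  · exact ⟨W, ‹_›, T, b₂, M, f, hb₂0, hinj, hlf, hsurj,
      fun u v huv => ⟨fun h => h.2, fun h => ⟨huv, h⟩⟩⟩
  · ext u v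
    simp only [SimpleGraph.compl_adj, SimpleGraph.sup_adj]
    constructor
    · rintro ⟨hne, hnadj⟩
      rw [hadj u v hne] at hnadj
      simp only [Set.mem_Icc, not_and_or, not_le] at hnadj
      rcases hnadj with h | h
      · exact Or.inl ⟨hne, (key1 u v).mpr h⟩
      · exact Or.inr ⟨hne, (key2 u v).mpr h⟩
    · rintro (⟨hne, hd⟩ | ⟨hne, hd⟩)
      · refine ⟨hne, ?_⟩
        rw [hadj u v hne]
        intro hmem
        exact absurd ((key1 u v).mp hd) (not_lt.mpr hmem.1)
      · refine ⟨hne, ?_⟩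
        rw [hadj u v hne]
        intro hmem
        exact absurd ((key2 u v).mp hd) (not_lt.mpr hmem.2)

/-- If a graph `G` is a `k`-AND-PCG, then its complement is a `2k`-OR-PCG. -/
theorem compl_of_andPCG_isORPCG {V : Type} [Fintype V] (k : ℕ) (G : SimpleGraph V)
    (h : IsANDPCG k G) : IsORPCG (2 * k) Gᶜ := by
  classical
  obtain ⟨Gs, hGs, rfl⟩ := h
  choose G1 G2 h1 h2 heq using fun i => compl_pcg_split (Gs i) (hGs i)
  refine ⟨fun j => if (finProdFinEquiv.symm j).1 = 0
      then G1 (finProdFinEquiv.symm j).2 else G2 (finProdFinEquiv.symm j).2, ?_, ?_⟩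
  · intro j
    dsimp only
    by_cases hj : (finProdFinEquiv.symm j).1 = 0
    · rw [if_pos hj]; exact h1 _
    · rw [if_neg hj]; exact h2 _
  · have hcompl : (⨅ i, Gs i)ᶜ = ⨆ i, (Gs i)ᶜ := compl_iInf
    rw [hcompl]
    ext u v
    simp only [SimpleGraph.iSup_adj]
    constructor
    · rintro ⟨i, hi⟩
      rw [heq i] at hi
      rcases hi with h | h
      · refine ⟨finProdFinEquiv (0, i), ?_⟩
        rw [Equiv.symm_apply_apply]
        exact h
      · refine ⟨finProdFinEquiv (1, i), ?_⟩
        rw [Equiv.symm_apply_apply]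
        simpa using h
    · rintro ⟨j, hj⟩
      refine ⟨(finProdFinEquiv.symm j).2, ?_⟩
      rw [heq]
      by_cases hj0 : (finProdFinEquiv.symm j).1 = 0
      · rw [if_pos hj0] at hj; exact Or.inl hj
      · rw [if_neg hj0] at hj; exact Or.inr hj
end
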